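/- The group G = ⟨a, b⟩ is a torsion group: every element of G has finite order. -/

import Mathlib

/-!
Setup: the automorphism group `Aut(T₈)` of the rooted 8-regular tree, realized
as the group of *portraits*: an automorphism is determined by the permutation
of `{1,…,8}` (here `Fin 8`) that it induces below each vertex (a finite word
over the alphabet).  Composition is written left-to-right: `p * q` acts by
first applying `p`, then `q` (this is the convention of the paper, where a
word `a b a b⁻¹ a` acts by applying `a` first).
-/

namespace T8

/-- The root permutation of the generator `a` : `(34)(67)(58)` on letters
`1,…,8`, written `0`-indexed on `Fin 8` as `(2 3)(5 6)(4 7)`. -/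
def σa : Equiv.Perm (Fin 8) := Equiv.swap 2 3 * Equiv.swap 5 6 * Equiv.swap 4 7

/-- The root permutation of the generator `b` : `(123)(456)` on letters
`1,…,8`, written `0`-indexed on `Fin 8` as `(0 1 2)(3 4 5)`. -/
def σb : Equiv.Perm (Fin 8) :=
  (Equiv.swap 0 1 * Equiv.swap 1 2) * (Equiv.swap 3 4 * Equiv.swap 4 5)

/-- An automorphism of the rooted `8`-regular tree, given by its portrait:
for each vertex `v` (a finite word over the `8`-letter alphabet), the
permutation induced on the letters just below `v`. -/
@[ext] structure Aut where
  val : List (Fin 8) → Equiv.Perm (Fin 8)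

/-- The section (state) of a tree automorphism at a first-level vertex `i`. -/
def sect (p : Aut) (i : Fin 8) : Aut := ⟨fun v => p.val (i :: v)⟩

/-- The section of a tree automorphism at an arbitrary vertex (word) `v`. -/
def sectWord (p : Aut) : List (Fin 8) → Aut
  | [] => p
  | i :: t => sectWord (sect p i) t

/-- The action of a tree automorphism on vertices:
`p (i·w) = (σ_p i) · (p_i w)` where `σ_p = p.val []` is the root permutation
and `p_i` is the section at `i`.  This is length- and prefix-preserving. -/
def act : Aut → List (Fin 8) → List (Fin 8)
  | _, [] => []
  | p, i :: t => p.val [] i :: act (sect p i) t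

/-- The action of the inverse of a tree automorphism on vertices. -/
def actInv : Aut → List (Fin 8) → List (Fin 8)
  | _, [] => []
  | p, i :: t => (p.val [])⁻¹ i :: actInv (sect p ((p.val [])⁻¹ i)) t

instance : One Aut := ⟨⟨fun _ => 1⟩⟩
instance : Mul Aut := ⟨fun p q => ⟨fun v => q.val (act p v) * p.val v⟩⟩
instance : Inv Aut := ⟨fun p => ⟨fun v => (p.val (actInv p v))⁻¹⟩⟩

@[simp] lemma one_val (v : List (Fin 8)) : (1 : Aut).val v = 1 := rfl
@[simp] lemma mul_val (p q : Aut) (v : List (Fin 8)) :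
    (p * q).val v = q.val (act p v) * p.val v := rfl
@[simp] lemma inv_val (p : Aut) (v : List (Fin 8)) :
    (p⁻¹).val v = (p.val (actInv p v))⁻¹ := rfl

@[simp] lemma sect_one (i : Fin 8) : sect 1 i = 1 := rfl

lemma sect_mul (p q : Aut) (i : Fin 8) :
    sect (p * q) i = sect p i * sect q (p.val [] i) := rfl

lemma sect_inv (p : Aut) (i : Fin 8) :
    sect p⁻¹ i = (sect p ((p.val [])⁻¹ i))⁻¹ := rfl

lemma act_one : ∀ v : List (Fin 8), act (1 : Aut) v = v
  | [] => rfl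
  | i :: t => by
    show (1 : Equiv.Perm (Fin 8)) i :: act (sect 1 i) t = i :: t
    rw [sect_one, act_one t, Equiv.Perm.one_apply]

lemma act_mul : ∀ (v : List (Fin 8)) (p q : Aut),
    act (p * q) v = act q (act p v)
  | [], _, _ => rfl
  | i :: t, p, q => by
    show (p * q).val [] i :: act (sect (p * q) i) t
        = act q (p.val [] i :: act (sect p i) t)
    rw [sect_mul, act_mul t]
    show (q.val (act p []) * p.val []) i :: _
        = q.val [] (p.val [] i) :: act (sect q (p.val [] i)) (act (sect p i) t)
    rfl

lemma act_inv : ∀ (v : List (Fin 8)) (p : Aut), act p⁻¹ v = actInv p v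
  | [], _ => rfl
  | i :: t, p => by
    show (p⁻¹).val [] i :: act (sect p⁻¹ i) t
        = (p.val [])⁻¹ i :: actInv (sect p ((p.val [])⁻¹ i)) t
    rw [sect_inv, act_inv t]
    rfl

lemma actInv_act : ∀ (v : List (Fin 8)) (p : Aut), actInv p (act p v) = v
  | [], _ => rfl
  | i :: t, p => by
    show (p.val [])⁻¹ (p.val [] i) ::
        actInv (sect p ((p.val [])⁻¹ (p.val [] i))) (act (sect p i) t) = i :: t
    rw [Equiv.Perm.inv_def, Equiv.symm_apply_apply, actInv_act t]

lemma act_actInv : ∀ (v : List (Fin 8)) (p : Aut), act p (actInv p v) = v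
  | [], _ => rfl
  | i :: t, p => by
    show p.val [] ((p.val [])⁻¹ i) ::
        act (sect p ((p.val [])⁻¹ i)) (actInv (sect p ((p.val [])⁻¹ i)) t) = i :: t
    rw [Equiv.Perm.inv_def, Equiv.apply_symm_apply, act_actInv t]

instance : Group Aut where
  mul_assoc p q r := by
    ext v i
    simp [mul_val, act_mul, mul_assoc]
  one_mul p := by
    ext v i
    simp [mul_val, act_one]
  mul_one p := by
    ext v i
    simp [mul_val]
  inv_mul_cancel p := by
    ext v i
    simp [mul_val, inv_val, act_inv, actInv_act]

/-- The portrait of the generator `a = ⟨a, 1, 1, 1, 1, 1, 1, 1⟩ (34)(67)(58)`: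
root permutation `σa`, section `a` at the first letter, trivial sections
elsewhere. -/
def aval : List (Fin 8) → Equiv.Perm (Fin 8)
  | [] => σa
  | i :: t => if i = 0 then aval t else 1

/-- The generator `a = ⟨a, 1, 1, 1, 1, 1, 1, 1⟩ (34)(67)(58)`. -/
def a : Aut := ⟨aval⟩

/-- The portraits of the generator `b` (for `tt`) and of `b⁻¹` (for `ff`):
`b = ⟨1, 1, 1, 1, 1, 1, b, b⁻¹⟩ (123)(456)` and
`b⁻¹ = ⟨1, 1, 1, 1, 1, 1, b⁻¹, b⟩ (132)(465)`. -/
def bval : Bool → List (Fin 8) → Equiv.Perm (Fin 8)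
  | s, [] => if s then σb else σb⁻¹
  | s, i :: t => if i = 6 then bval s t else if i = 7 then bval (!s) t else 1

/-- The generator `b = ⟨1, 1, 1, 1, 1, 1, b, b⁻¹⟩ (123)(456)`. -/
def b : Aut := ⟨bval true⟩

/-- Sanity: the first section of `a` is `a` itself. -/
lemma sect_a_zero : sect a 0 = a := rfl

/-- Sanity: the section of `b` at the letter `7` (index `6`) is `b` itself. -/
lemma sect_b_six : sect b 6 = b := rfl

/-- The group `G = ⟨a, b⟩ = ⟨a, b, b⁻¹⟩ ≤ Aut(T₈)` of the paper. -/
def G : Subgroup Aut := Subgroup.closure {a, b}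

lemma a_mem : a ∈ G := Subgroup.subset_closure (Set.mem_insert _ _)

lemma b_mem : b ∈ G := Subgroup.subset_closure (Set.mem_insert_of_mem _ rfl)

end T8

/-!
Write an element of `G` as a word in `a` and `b`. Collecting the powers of `b`, it is conjugate
to `b ^ t` or to an alternating product `(a b^{t₁}) ⋯ (a b^{tₙ})` with `tᵢ ∈ ℤ/3`, where `n` is
the number of letters `a`; we induct on `n`. If all `tᵢ` agree, the element is a power of `a`,
`ab` or `ab²`, which have finite order (the sections of `(ab)⁸` are all conjugate to `a`). If
some `tᵢ = 0`, a cyclic rotation produces a cancellation `a a`. Otherwise a rotation starts with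
`a b a b²`. An automorphism has finite order as soon as, for each first-level vertex `i`, the
section at `i` of its power along the orbit of `i` has finite order. Each letter `a` of a word
contributes a letter `a` to exactly one first-level section, and for `a b a b² ⋯` two of these
cancel at vertex `0`, so every such orbit section has fewer than `n` letters `a` (for
`a b a b²` itself, one checks that `0` is fixed and the other vertices form a single orbit).
-/

theorem isOfFinOrder_mul_comm {H : Type*} [Group H] (x y : H) :
    IsOfFinOrder (x * y) ↔ IsOfFinOrder (y * x) :=
  ⟨(isConj_iff.mpr ⟨y, by group⟩).isOfFinOrder, (isConj_iff.mpr ⟨x, by group⟩).isOfFinOrder⟩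

theorem List.IsRotated.isOfFinOrder_prod_iff {H : Type*} [Group H] {l l' : List H}
    (h : l ~r l') : IsOfFinOrder l.prod ↔ IsOfFinOrder l'.prod := by
  obtain ⟨n, rfl⟩ := h
  conv_lhs => rw [← List.take_append_drop (n % l.length) l]
  rw [List.rotate_eq_drop_append_take_mod, List.prod_append, List.prod_append,
    isOfFinOrder_mul_comm]

theorem List.eq_append_replicate_or_exists_cons_cons_ne {α : Type*} (p : α) :
    ∀ l : List α,
      (∃ v j, p ∉ v ∧ l = v ++ List.replicate j p) ∨ ∃ u y r, y ≠ p ∧ l = u ++ p :: y :: r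
  | [] => Or.inl ⟨[], 0, List.not_mem_nil, rfl⟩
  | x :: l => by
    rcases eq_append_replicate_or_exists_cons_cons_ne p l with
      ⟨v, j, hv, rfl⟩ | ⟨u, y, r, hy, rfl⟩
    · by_cases hx : x = p
      · subst hx
        cases v with
        | nil => exact Or.inl ⟨[], j + 1, List.not_mem_nil, rfl⟩
        | cons z v => exact Or.inr ⟨[], z, v ++ List.replicate j x,
            fun h => hv (h ▸ List.mem_cons_self), rfl⟩
      · exact Or.inl ⟨x :: v, j, by simp [Ne.symm hx, hv], rfl⟩
    · exact Or.inr ⟨x :: u, y, r, hy, rfl⟩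

theorem List.exists_isRotated_cons_cons_ne {α : Type*} {p : α} {l : List α} (hp : p ∈ l)
    (hne : ∃ y ∈ l, y ≠ p) : ∃ y F, y ≠ p ∧ l ~r p :: y :: F := by
  rcases eq_append_replicate_or_exists_cons_cons_ne p l with
    ⟨v, j, hv, rfl⟩ | ⟨u, y, r, hy, rfl⟩
  · obtain ⟨y, hy, hyp⟩ := hne
    obtain ⟨z, v, rfl⟩ : ∃ z v', v = z :: v' := by
      cases v with
      | nil => simp [List.eq_of_mem_replicate (by simpa using hy)] at hyp
      | cons z v => exact ⟨z, v, rfl⟩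
    obtain ⟨j, rfl⟩ : ∃ j', j = j' + 1 := by
      cases j with
      | zero => simp [hv] at hp
      | succ j => exact ⟨j, rfl⟩
    refine ⟨z, v ++ List.replicate j p, fun h => hv (h ▸ List.mem_cons_self), ?_⟩
    rw [List.replicate_succ', ← List.append_assoc]
    exact List.isRotated_append
  · exact ⟨y, r ++ u, hy, List.isRotated_append⟩

theorem Function.sum_range_minimalPeriod_le {α M : Type*} [Fintype α] [AddCommMonoid M]
    [PartialOrder M] [CanonicallyOrderedAdd M] (f : α → α) (x : α) (m : α → M) :
    ∑ k ∈ Finset.range (minimalPeriod f x), m (f^[k] x) ≤ ∑ y, m y := by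
  classical
  rw [← Finset.sum_image fun k hk l hl hkl => iterate_injOn_Iio_minimalPeriod
    (Finset.mem_range.mp hk) (Finset.mem_range.mp hl) hkl]
  exact Finset.sum_le_sum_of_subset (Finset.subset_univ _)

namespace T8

lemma root_mul (p q : Aut) : (p * q).val [] = q.val [] * p.val [] := rfl

lemma root_pow (g : Aut) (n : ℕ) : (g ^ n).val [] = g.val [] ^ n := by
  induction n with
  | zero => rfl
  | succ n ih => rw [pow_succ, root_mul, ih, pow_succ']

lemma ext_root_sect {p q : Aut} (hroot : p.val [] = q.val [])
    (hsect : ∀ i, sect p i = sect q i) : p = q := by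
  ext : 1
  funext v
  cases v with
  | nil => exact hroot
  | cons i t => exact congrArg (fun r : Aut => r.val t) (hsect i)

lemma eq_of_bisim (R : Aut → Aut → Prop)
    (hR : ∀ p q, R p q → p.val [] = q.val [] ∧ ∀ i, R (sect p i) (sect q i))
    {p q : Aut} (h : R p q) : p = q := by
  ext : 1
  funext v
  induction v generalizing p q with
  | nil => exact (hR p q h).1
  | cons i t ih => exact ih ((hR p q h).2 i)

lemma sect_pow_of_root_apply_eq {p : Aut} {i : Fin 8} (hp : p.val [] i = i) (n : ℕ) :
    sect (p ^ n) i = sect p i ^ n := by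
  induction n with
  | zero => rfl
  | succ n ih => rw [pow_succ', sect_mul, hp, ih, pow_succ']

lemma isOfFinOrder_of_root_eq_one {g : Aut} (hroot : g.val [] = 1)
    (hsect : ∀ i, IsOfFinOrder (sect g i)) : IsOfFinOrder g := by
  refine isOfFinOrder_iff_pow_eq_one.mpr
    ⟨∏ i, orderOf (sect g i), Finset.prod_pos fun i _ => (hsect i).orderOf_pos, ?_⟩
  refine ext_root_sect (by rw [root_pow, hroot, one_pow]; rfl) fun i => ?_
  rw [sect_pow_of_root_apply_eq (by rw [hroot]; rfl), sect_one,
    ← orderOf_dvd_iff_pow_eq_one]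
  exact Finset.dvd_prod_of_mem _ (Finset.mem_univ i)

lemma isOfFinOrder_of_sect_pow_minimalPeriod {g : Aut}
    (h : ∀ i, IsOfFinOrder (sect (g ^ Function.minimalPeriod (g.val []) i) i)) :
    IsOfFinOrder g := by
  set σ := g.val []
  refine IsOfFinOrder.of_pow (n := orderOf σ) ?_ (orderOf_pos σ).ne'
  refine isOfFinOrder_of_root_eq_one (by rw [root_pow, pow_orderOf_eq_one]) fun i => ?_
  have hper : Function.IsPeriodicPt σ (orderOf σ) i := by
    rw [Function.IsPeriodicPt, Function.IsFixedPt, Equiv.Perm.iterate_eq_pow,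
      pow_orderOf_eq_one, Equiv.Perm.one_apply]
  obtain ⟨q, hq⟩ := hper.minimalPeriod_dvd
  have hfix : (g ^ Function.minimalPeriod σ i).val [] i = i := by
    rw [root_pow, ← Equiv.Perm.iterate_eq_pow]
    exact Function.isPeriodicPt_minimalPeriod σ i
  rw [hq, pow_mul, sect_pow_of_root_apply_eq hfix]
  exact (h i).pow

lemma sect_a (i : Fin 8) : sect a i = if i = 0 then a else 1 := by
  split_ifs with h
  · subst h; rfl
  · ext : 1
    funext v
    exact if_neg h

lemma sect_bval (s : Bool) (i : Fin 8) :
    sect ⟨bval s⟩ i = if i = 6 then ⟨bval s⟩ else if i = 7 then ⟨bval !s⟩ else 1 := by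
  split_ifs with h6 h7
  · subst h6; rfl
  · subst h7; rfl
  · ext : 1
    funext v
    exact (if_neg h6).trans (if_neg h7)

lemma a_mul_a : a * a = 1 := by
  refine eq_of_bisim (fun p q => (p = a * a ∨ p = 1) ∧ q = 1) ?_ ⟨Or.inl rfl, rfl⟩
  rintro p q ⟨rfl | rfl, rfl⟩
  · refine ⟨by decide, fun i => ⟨?_, rfl⟩⟩
    have hσ : ∀ i : Fin 8, a.val [] i = 0 ↔ i = 0 := by decide
    rw [sect_mul, sect_a, sect_a]
    by_cases hi : i = 0
    · simp [hi, (hσ 0).mpr rfl]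
    · simp [hi, (hσ i).not.mpr hi]
  · exact ⟨rfl, fun i => ⟨Or.inr rfl, rfl⟩⟩

lemma a_inv : a⁻¹ = a := inv_eq_of_mul_eq_one_right a_mul_a

lemma bval_nil_apply_eq_iff (s : Bool) (i : Fin 8) :
    (bval s [] i = 6 ↔ i = 6) ∧ (bval s [] i = 7 ↔ i = 7) := by
  revert i; cases s <;> decide

lemma bval_mul_bval_not (s : Bool) : (⟨bval s⟩ * ⟨bval !s⟩ : Aut) = 1 := by
  refine eq_of_bisim (fun p q => (p = 1 ∨ ∃ s, p = ⟨bval s⟩ * ⟨bval !s⟩) ∧ q = 1) ?_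
    ⟨Or.inr ⟨s, rfl⟩, rfl⟩
  rintro p q ⟨rfl | ⟨s, rfl⟩, rfl⟩
  · exact ⟨rfl, fun i => ⟨Or.inl rfl, rfl⟩⟩
  refine ⟨by cases s <;> decide, fun i => ⟨?_, rfl⟩⟩
  have h := bval_nil_apply_eq_iff s
  rw [sect_mul, sect_bval, sect_bval]
  by_cases hi6 : i = 6
  · exact Or.inr ⟨s, by simp [hi6, (h 6).1.mpr rfl]⟩
  by_cases hi7 : i = 7
  · exact Or.inr ⟨!s, by simp [hi7, (h 7).2.mpr rfl]⟩
  · exact Or.inl (by simp [hi6, hi7, (h i).1, (h i).2])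

lemma bval_mul_self (s : Bool) : (⟨bval s⟩ * ⟨bval s⟩ : Aut) = ⟨bval !s⟩ := by
  refine eq_of_bisim
    (fun p q => (p = 1 ∧ q = 1) ∨ ∃ s, p = ⟨bval s⟩ * ⟨bval s⟩ ∧ q = ⟨bval !s⟩) ?_
    (Or.inr ⟨s, rfl, rfl⟩)
  rintro p q (⟨rfl, rfl⟩ | ⟨s, rfl, rfl⟩)
  · exact ⟨rfl, fun i => Or.inl ⟨rfl, rfl⟩⟩
  refine ⟨by cases s <;> decide, fun i => ?_⟩
  have h := bval_nil_apply_eq_iff s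
  rw [sect_mul, sect_bval, sect_bval, sect_bval]
  by_cases hi6 : i = 6
  · exact Or.inr ⟨s, by simp [hi6, (h 6).1.mpr rfl]⟩
  by_cases hi7 : i = 7
  · exact Or.inr ⟨!s, by simp [hi7, (h 7).2.mpr rfl]⟩
  · exact Or.inl (by simp [hi6, hi7, (h i).1, (h i).2])

lemma b_inv : b⁻¹ = ⟨bval false⟩ := inv_eq_of_mul_eq_one_right (bval_mul_bval_not true)

lemma b_sq : b ^ 2 = b⁻¹ := by rw [pow_two, b_inv]; exact bval_mul_self true

lemma b_pow_three : b ^ 3 = 1 := by rw [pow_succ, b_sq, inv_mul_cancel]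

lemma sect_b (i : Fin 8) : sect b i = if i = 6 then b else if i = 7 then b ^ 2 else 1 := by
  rw [b_sq, b_inv]; exact sect_bval true i

lemma isOfFinOrder_a : IsOfFinOrder a :=
  isOfFinOrder_iff_pow_eq_one.mpr ⟨2, two_pos, by rw [pow_two, a_mul_a]⟩

lemma isOfFinOrder_b : IsOfFinOrder b :=
  isOfFinOrder_iff_pow_eq_one.mpr ⟨3, three_pos, b_pow_three⟩

lemma b_pow_val_add (s t : ZMod 3) : b ^ (s + t).val = b ^ s.val * b ^ t.val := by
  rw [← pow_add, pow_eq_pow_mod (s.val + t.val) b_pow_three, ZMod.val_add]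

inductive Letter
  | a
  | b
  deriving DecidableEq

def Letter.toAut : Letter → Aut
  | .a => T8.a
  | .b => T8.b

def eval (w : List Letter) : Aut := (w.map Letter.toAut).prod

@[simp] lemma eval_nil : eval [] = 1 := rfl

@[simp] lemma eval_cons (x : Letter) (w : List Letter) : eval (x :: w) = x.toAut * eval w :=
  List.prod_cons

@[simp] lemma eval_append (u v : List Letter) : eval (u ++ v) = eval u * eval v := by
  simp [eval]

lemma eval_flatten_replicate (w : List Letter) (n : ℕ) :
    eval (List.replicate n w).flatten = eval w ^ n := by
  simp [eval, List.map_flatten, List.prod_flatten, List.map_replicate]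

def Letter.sect : Letter → Fin 8 → List Letter
  | .a, i => if i = 0 then [.a] else []
  | .b, i => if i = 6 then [.b] else if i = 7 then [.b, .b] else []

def wordSect : List Letter → Fin 8 → List Letter
  | [], _ => []
  | x :: w, i => x.sect i ++ wordSect w (x.toAut.val [] i)

lemma Letter.sect_toAut (x : Letter) (i : Fin 8) : T8.sect x.toAut i = eval (x.sect i) := by
  cases x
  · rw [Letter.toAut, sect_a, Letter.sect]; split_ifs <;> simp [Letter.toAut]
  · rw [Letter.toAut, sect_b, Letter.sect]; split_ifs <;> simp [Letter.toAut, pow_two]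

lemma sect_eval (w : List Letter) (i : Fin 8) : sect (eval w) i = eval (wordSect w i) := by
  induction w generalizing i with
  | nil => rfl
  | cons x w ih => rw [eval_cons, sect_mul, Letter.sect_toAut, ih, wordSect, eval_append]

lemma Letter.sum_count_sect (x : Letter) : ∑ i, (x.sect i).count .a = [x].count .a := by
  cases x <;> decide

lemma sum_count_wordSect (w : List Letter) : ∑ i, (wordSect w i).count .a = w.count .a := by
  induction w with
  | nil => simp [wordSect]
  | cons x w ih =>
    simp only [wordSect, List.count_append, Finset.sum_add_distrib]
    rw [Equiv.sum_comp (x.toAut.val []) (fun i => (wordSect w i).count .a), ih,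
      Letter.sum_count_sect, ← List.count_append, List.singleton_append]

lemma isOfFinOrder_a_mul_b : IsOfFinOrder (a * b) := by
  have hroot : ((a * b) ^ 8).val [] = 1 := by rw [root_pow]; decide +kernel
  have hsect : ∀ i, wordSect (List.replicate 8 [.a, .b]).flatten i ~r [.a, .b, .b, .b] := by
    decide +kernel
  refine IsOfFinOrder.of_pow (isOfFinOrder_of_root_eq_one hroot fun i => ?_) (n := 8)
    (by norm_num)
  have hab : a * b = eval [.a, .b] := by simp [Letter.toAut]
  have hb3 : b * (b * b) = 1 := by rw [← b_pow_three, pow_three]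
  rw [hab, ← eval_flatten_replicate, sect_eval, eval, ((hsect i).map _).isOfFinOrder_prod_iff]
  simpa [Letter.toAut, hb3] using isOfFinOrder_a

def ACountLE (n : ℕ) (g : Aut) : Prop := ∃ w : List Letter, eval w = g ∧ w.count .a ≤ n

lemma ACountLE.mul {m n : ℕ} {g h : Aut} (hg : ACountLE m g) (hh : ACountLE n h) :
    ACountLE (m + n) (g * h) := by
  obtain ⟨u, rfl, hu⟩ := hg
  obtain ⟨v, rfl, hv⟩ := hh
  exact ⟨u ++ v, eval_append u v, by rw [List.count_append]; omega⟩

lemma ACountLE.sect_pow {g : Aut} {f : Fin 8 → ℕ} (hf : ∀ j, ACountLE (f j) (sect g j))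
    (c : ℕ) (i : Fin 8) :
    ACountLE (∑ k ∈ Finset.range c, f ((g.val [])^[k] i)) (sect (g ^ c) i) := by
  induction c generalizing i with
  | zero => exact ⟨[], rfl, le_rfl⟩
  | succ c ih =>
    rw [pow_succ', sect_mul, Finset.sum_range_succ', add_comm]
    simpa only [Function.iterate_succ_apply, Function.iterate_zero_apply] using
      (hf i).mul (ih (g.val [] i))

lemma ACountLE.sect_pow_minimalPeriod {g : Aut} {f : Fin 8 → ℕ}
    (hf : ∀ j, ACountLE (f j) (sect g j)) (i : Fin 8) :
    ACountLE (∑ j, f j) (sect (g ^ Function.minimalPeriod (g.val []) i) i) := by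
  obtain ⟨w, hw, hcount⟩ := ACountLE.sect_pow hf (Function.minimalPeriod (g.val []) i) i
  exact ⟨w, hw, hcount.trans (Function.sum_range_minimalPeriod_le _ _ _)⟩

def altWord (E : List (ZMod 3)) : List Letter :=
  E.flatMap fun t => .a :: List.replicate t.val .b

lemma altWord_cons (t : ZMod 3) (E : List (ZMod 3)) :
    altWord (t :: E) = .a :: List.replicate t.val .b ++ altWord E := rfl

lemma count_altWord (E : List (ZMod 3)) : (altWord E).count .a = E.length := by
  induction E with
  | nil => rfl
  | cons t E ih => simp [altWord_cons, List.count_replicate, ih]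

lemma eval_altWord (E : List (ZMod 3)) :
    eval (altWord E) = (E.map fun t => a * b ^ t.val).prod := by
  induction E with
  | nil => rfl
  | cons t E ih =>
    rw [altWord_cons, List.cons_append, eval_cons, eval_append, ih]
    simp [eval, Letter.toAut, mul_assoc]

lemma exists_eval_eq_b_pow_mul_eval_altWord (w : List Letter) :
    ∃ (t : ZMod 3) (E : List (ZMod 3)), eval w = b ^ t.val * eval (altWord E) ∧
      E.length = w.count .a := by
  induction w with
  | nil => exact ⟨0, [], by simp [altWord], rfl⟩
  | cons x w ih =>
    obtain ⟨t, E, hw, hE⟩ := ih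
    cases x
    · refine ⟨0, t :: E, ?_, by simp [hE]⟩
      simp [hw, eval_altWord, Letter.toAut, mul_assoc]
    · refine ⟨1 + t, E, ?_, by simpa using hE⟩
      rw [eval_cons, hw, b_pow_val_add, ← mul_assoc, ZMod.val_one, pow_one]
      rfl

lemma isOfFinOrder_eval_altWord_iff_of_isRotated {E E' : List (ZMod 3)} (h : E ~r E') :
    IsOfFinOrder (eval (altWord E)) ↔ IsOfFinOrder (eval (altWord E')) := by
  rw [eval_altWord, eval_altWord]
  exact (h.map _).isOfFinOrder_prod_iff

lemma isOfFinOrder_a_mul_b_pow (t : ZMod 3) : IsOfFinOrder (a * b ^ t.val) := by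
  fin_cases t
  · change IsOfFinOrder (a * b ^ 0)
    simpa using isOfFinOrder_a
  · change IsOfFinOrder (a * b ^ 1)
    simpa using isOfFinOrder_a_mul_b
  · change IsOfFinOrder (a * b ^ 2)
    have h := isOfFinOrder_a_mul_b.inv
    rw [mul_inv_rev, a_inv, isOfFinOrder_mul_comm, ← b_sq] at h
    exact h

lemma eval_altWord_of_forall_eq {E : List (ZMod 3)} {t : ZMod 3} (h : ∀ y ∈ E, y = t) :
    eval (altWord E) = (a * b ^ t.val) ^ E.length := by
  rw [eval_altWord, List.eq_replicate_iff.mpr ⟨rfl, h⟩, List.map_replicate,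
    List.prod_replicate, List.length_replicate]

lemma aCountLE_eval_altWord_zero_cons_cons (y : ZMod 3) (F : List (ZMod 3)) :
    ACountLE F.length (eval (altWord (0 :: y :: F))) := by
  refine ⟨List.replicate y.val .b ++ altWord F, ?_,
    by simp [List.count_replicate, count_altWord]⟩
  rw [altWord_cons, altWord_cons]
  simp [Letter.toAut, ← mul_assoc, a_mul_a]

lemma isOfFinOrder_eval_altWord_one_two (ih : ∀ g, ACountLE 1 g → IsOfFinOrder g) :
    IsOfFinOrder (eval (altWord [1, 2])) := by
  have hroot : (eval (altWord [1, 2]) ^ 7).val [] = 1 := by rw [root_pow]; decide +kernel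
  have hsect : ∀ i, (wordSect (List.replicate 7 (altWord [1, 2])).flatten i).count .a ≤ 1 ∨
      wordSect (List.replicate 7 (altWord [1, 2])).flatten i = List.replicate 7 .a := by
    decide +kernel
  refine IsOfFinOrder.of_pow (n := 7)
    (isOfFinOrder_of_root_eq_one hroot fun i => ?_) (by norm_num)
  rw [← eval_flatten_replicate, sect_eval]
  rcases hsect i with hcount | hword
  · exact ih _ ⟨_, rfl, hcount⟩
  · rw [hword, eval, List.map_replicate, List.prod_replicate]
    exact isOfFinOrder_a.pow

lemma isOfFinOrder_eval_altWord_one_two_cons (s : ZMod 3) (F : List (ZMod 3))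
    (ih : ∀ m < F.length + 3, ∀ g, ACountLE m g → IsOfFinOrder g) :
    IsOfFinOrder (eval (altWord (1 :: 2 :: s :: F))) := by
  set w := altWord (1 :: 2 :: s :: F)
  -- `a b a b²` returns vertex `0` to itself, so the word read at `0` starts with `a a`.
  have hw0 : wordSect w 0 = .a :: .a :: wordSect (List.replicate s.val .b ++ altWord F) 0 :=
    rfl
  set f := fun j => (wordSect w j).count .a
  have hf : ∀ j, ACountLE (Function.update f 0 (f 0 - 2) j) (sect (eval w) j) := by
    intro j
    rcases eq_or_ne j 0 with rfl | hj
    · refine ⟨wordSect (List.replicate s.val .b ++ altWord F) 0, ?_, by simp [f, hw0]⟩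
      rw [sect_eval, hw0, eval_cons, eval_cons, ← mul_assoc]
      simp [Letter.toAut, a_mul_a]
    · exact ⟨wordSect w j, (sect_eval w j).symm, by simp [hj, f]⟩
  have htot : ∑ j, Function.update f 0 (f 0 - 2) j < F.length + 3 := by
    have hsum : ∑ j, f j = F.length + 3 := (sum_count_wordSect w).trans (count_altWord _)
    have hf0 : 2 ≤ f 0 := by simp [f, hw0]
    rw [Fin.sum_univ_succ] at hsum ⊢
    simp only [Function.update_self, Function.update_of_ne (Fin.succ_ne_zero _)]
    omega
  exact isOfFinOrder_of_sect_pow_minimalPeriod fun i =>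
    ih _ htot _ (ACountLE.sect_pow_minimalPeriod hf i)

lemma isOfFinOrder_eval_altWord (E : List (ZMod 3))
    (ih : ∀ m < E.length, ∀ g, ACountLE m g → IsOfFinOrder g) :
    IsOfFinOrder (eval (altWord E)) := by
  have eq_two : ∀ y : ZMod 3, y ≠ 0 → y ≠ 1 → y = 2 := by decide
  by_cases hconst : ∃ t, ∀ y ∈ E, y = t
  · obtain ⟨t, ht⟩ := hconst
    rw [eval_altWord_of_forall_eq ht]
    exact (isOfFinOrder_a_mul_b_pow t).pow
  simp only [not_exists, not_forall, exists_prop] at hconst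
  obtain ⟨p, hp, hp'⟩ : ∃ p ∈ E, p = 0 ∨ (p = 1 ∧ (0 : ZMod 3) ∉ E) := by
    by_cases h0 : (0 : ZMod 3) ∈ E
    · exact ⟨0, h0, Or.inl rfl⟩
    by_cases h1 : (1 : ZMod 3) ∈ E
    · exact ⟨1, h1, Or.inr ⟨rfl, h0⟩⟩
    obtain ⟨y, hy, hy2⟩ := hconst 2
    exact absurd (eq_two y (fun h => h0 (h ▸ hy)) (fun h => h1 (h ▸ hy))) hy2
  obtain ⟨y, F, hyp, hrot⟩ := List.exists_isRotated_cons_cons_ne hp (hconst p)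
  have hlen : E.length = F.length + 2 := by simpa using hrot.perm.length_eq
  rw [isOfFinOrder_eval_altWord_iff_of_isRotated hrot]
  rcases hp' with rfl | ⟨rfl, h0⟩
  · exact ih F.length (by omega) _ (aCountLE_eval_altWord_zero_cons_cons y F)
  · obtain rfl : y = 2 := eq_two y (fun h => h0 (hrot.mem_iff.mpr (by simp [h]))) hyp
    cases F with
    | nil => exact isOfFinOrder_eval_altWord_one_two (ih 1 (by omega))
    | cons s F => exact isOfFinOrder_eval_altWord_one_two_cons s F (hlen ▸ ih)

lemma isOfFinOrder_b_pow_mul_eval_altWord (t : ZMod 3) (E : List (ZMod 3))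
    (ih : ∀ m < E.length, ∀ g, ACountLE m g → IsOfFinOrder g) :
    IsOfFinOrder (b ^ t.val * eval (altWord E)) := by
  rcases E.eq_nil_or_concat' with rfl | ⟨E, s, rfl⟩
  · rw [altWord, List.flatMap_nil, eval_nil, mul_one]
    exact isOfFinOrder_b.pow
  have hmerge : eval (altWord (E ++ [s])) * b ^ t.val = eval (altWord (E ++ [s + t])) := by
    simp [eval_altWord, mul_assoc, b_pow_val_add]
  rw [isOfFinOrder_mul_comm, hmerge]
  exact isOfFinOrder_eval_altWord _ (by simpa using ih)

lemma isOfFinOrder_of_aCountLE (n : ℕ) : ∀ g, ACountLE n g → IsOfFinOrder g := by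
  induction n using Nat.strong_induction_on with
  | _ n ih =>
  rintro g ⟨w, rfl, hw⟩
  obtain ⟨t, E, he, hlen⟩ := exists_eval_eq_b_pow_mul_eval_altWord w
  rw [he]
  exact isOfFinOrder_b_pow_mul_eval_altWord t E fun m hm => ih m (by omega)

lemma exists_eval_eq_of_mem_G {g : Aut} (hg : g ∈ G) : ∃ w, eval w = g := by
  have hfin : ∀ x ∈ ({a, b} : Set Aut), IsOfFinOrder x := by
    rintro x (rfl | rfl)
    exacts [isOfFinOrder_a, isOfFinOrder_b]
  rw [G, ← Subgroup.mem_toSubmonoid, Subgroup.closure_toSubmonoid_of_isOfFinOrder hfin] at hg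
  induction hg using Submonoid.closure_induction with
  | mem x hx =>
    rcases hx with rfl | rfl
    exacts [⟨[.a], mul_one _⟩, ⟨[.b], mul_one _⟩]
  | one => exact ⟨[], rfl⟩
  | mul x y _ _ hx hy =>
    obtain ⟨u, rfl⟩ := hx
    obtain ⟨v, rfl⟩ := hy
    exact ⟨u ++ v, eval_append u v⟩

/-- `G = ⟨a, b⟩` is a torsion group: every element has finite
order. -/
theorem stmt_10 : ∀ g ∈ G, IsOfFinOrder g := by
  intro g hg
  obtain ⟨w, rfl⟩ := exists_eval_eq_of_mem_G hg
  exact isOfFinOrder_of_aCountLE _ _ ⟨w, rfl, le_rfl⟩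

end T8
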